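/- Let G be a digraph with vertex b and I ⊆ V(G) \ {b} such that every finite subset of I admits an edge-disjoint linkage to b. Let D, D' be vertex sets with D' ⊆ D, D' exact, and let L be an edge-disjoint linkage from I ∩ D to b. If some path P ∈ L starts at a vertex in D \ D', then no vertex of P lies in D'. -/

import Mathlib

/-!
Every path of `L` that meets `D'` must leave `D'` before reaching `b ∉ D'`, and so uses a
`D'`-crossing edge. The paths starting in `D' ∩ I` (all in `L`, as `D' ⊆ D`) are edge-disjoint
and so already use up all `|D' ∩ I|` crossing edges; a path starting outside `D'` that met `D'`
would need one more.
-/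

/-- A (finite) directed path in the digraph with adjacency `Adj`:
a nonempty list of distinct vertices whose consecutive pairs are edges. -/
structure DiPath {V : Type*} (Adj : V → V → Prop) : Type _ where
  verts : List V
  ne : verts ≠ []
  chain : verts.Chain' Adj
  nodup : verts.Nodup

namespace DiPath
variable {V : Type*} {Adj : V → V → Prop}
/-- The first vertex of a directed path. -/
def first (P : DiPath Adj) : V := P.verts.head P.ne
/-- The last vertex of a directed path. -/
def last (P : DiPath Adj) : V := P.verts.getLast P.ne
/-- The (directed) edges of a path, as ordered pairs of consecutive vertices. -/
def edges (P : DiPath Adj) : List (V × V) := P.verts.zip P.verts.tail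
/-- The edge set of a path. -/
def edgeSet (P : DiPath Adj) : Set (V × V) := {e | e ∈ P.edges}
/-- The vertex set of a path. -/
def vertexSet (P : DiPath Adj) : Set V := {v | v ∈ P.verts}
end DiPath

/-- A directed ray: a one-way infinite directed path. -/
structure DiRay {V : Type*} (Adj : V → V → Prop) : Type _ where
  f : ℕ → V
  inj : Function.Injective f
  adj : ∀ n, Adj (f n) (f (n + 1))

namespace DiRay
variable {V : Type*} {Adj : V → V → Prop}
/-- The first vertex of a ray. -/
def first (R : DiRay Adj) : V := R.f 0
/-- The edge set of a ray. -/
def edgeSet (R : DiRay Adj) : Set (V × V) := Set.range fun n => (R.f n, R.f (n + 1))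
/-- The vertex set of a ray. -/
def vertexSet (R : DiRay Adj) : Set V := Set.range R.f
end DiRay

/-- A path or a ray. -/
inductive PR {V : Type*} (Adj : V → V → Prop) : Type _
  | path : DiPath Adj → PR Adj
  | ray : DiRay Adj → PR Adj

namespace PR
variable {V : Type*} {Adj : V → V → Prop}
/-- The first vertex. -/
def first : PR Adj → V
  | .path P => P.first
  | .ray R => R.first
/-- The edge set. -/
def edgeSet : PR Adj → Set (V × V)
  | .path P => P.edgeSet
  | .ray R => R.edgeSet
/-- The vertex set. -/
def vertexSet : PR Adj → Set V
  | .path P => P.vertexSet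
  | .ray R => R.vertexSet
end PR

/-- A vertex `v` dominates `b` (edge version): there are infinitely many
pairwise edge-disjoint directed `v`–`b` paths. -/
def VDom {V : Type*} (Adj : V → V → Prop) (b v : V) : Prop :=
  ∃ P : ℕ → DiPath Adj, Function.Injective P ∧ (∀ n, (P n).first = v) ∧
    (∀ n, (P n).last = b) ∧ ∀ m n, m ≠ n → Disjoint (P m).edgeSet (P n).edgeSet

/-- A ray `R` dominates `b` (edge version): there are infinitely many pairwise
edge-disjoint directed paths from `R` to `b`. -/
def RDom {V : Type*} (Adj : V → V → Prop) (b : V) (R : DiRay Adj) : Prop :=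
  ∃ P : ℕ → DiPath Adj, Function.Injective P ∧ (∀ n, (P n).first ∈ R.vertexSet) ∧
    (∀ n, (P n).last = b) ∧ ∀ m n, m ≠ n → Disjoint (P m).edgeSet (P n).edgeSet

/-- A path or ray is good for `b` if it ends at `b` or dominates `b`
(a path dominates `b` if its last vertex does; a ray dominates as a ray). -/
def PR.Good {V : Type*} {Adj : V → V → Prop} (b : V) : PR Adj → Prop
  | .path P => P.last = b ∨ VDom Adj b P.last
  | .ray R => RDom Adj b R

/-- A domination linkage (edge version) from `I` to `b`: pairwise edge-disjoint
paths or rays, one starting at each vertex of `I`, each ending at `b` or dominating `b`. -/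
def DomLinkage {V : Type*} (Adj : V → V → Prop) (b : V) (I : Set V) : Prop :=
  ∃ Q : I → PR Adj, (∀ v : I, (Q v).first = (v : V)) ∧ (∀ v, (Q v).Good b) ∧
    ∀ v w : I, v ≠ w → Disjoint (Q v).edgeSet (Q w).edgeSet

/-- The finite set `S` can be linked to `b` by pairwise edge-disjoint directed paths,
one starting at each vertex of `S`, each ending at `b`. -/
def FinLinked {V : Type*} (Adj : V → V → Prop) (b : V) (S : Finset V) : Prop :=
  ∃ P : S → DiPath Adj, (∀ s, (P s).first = (s : V)) ∧ (∀ s, (P s).last = b) ∧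
    ∀ s t, s ≠ t → Disjoint (P s).edgeSet (P t).edgeSet

/-- The set of `D`-crossing edges: edges with tail in `D` and head outside `D`. -/
def Cross {V : Type*} (Adj : V → V → Prop) (D : Set V) : Set (V × V) :=
  {e | Adj e.1 e.2 ∧ e.1 ∈ D ∧ e.2 ∉ D}

/-- `D` is exact (for `I` and `b`): `b ∉ D` and the number of `D`-crossing
edges is finite and equals `|D ∩ I|`. -/
def Exact {V : Type*} (Adj : V → V → Prop) (b : V) (I D : Set V) : Prop :=
  b ∉ D ∧ (Cross Adj D).Finite ∧ (D ∩ I).Finite ∧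
    (Cross Adj D).ncard = (D ∩ I).ncard

namespace List

variable {α : Type*}

theorem IsChain.rel_of_mem_zip_tail {R : α → α → Prop} :
    ∀ {l : List α}, l.IsChain R → ∀ {e : α × α}, e ∈ l.zip l.tail → R e.1 e.2
  | a :: b :: l, hl, e, he => by
    rcases mem_cons.mp he with rfl | he
    · exact (isChain_cons_cons.mp hl).1
    · exact hl.tail.rel_of_mem_zip_tail he

theorem exists_mem_zip_tail_of_mem_of_not_getLast {p : α → Prop} :
    ∀ {l : List α} (hl : l ≠ []) {a : α}, a ∈ l → p a → ¬ p (l.getLast hl) →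
      ∃ e ∈ l.zip l.tail, p e.1 ∧ ¬ p e.2
  | [x], _, a, ha, hpa, hlast => by
    rw [mem_singleton.mp ha] at hpa
    exact absurd hpa hlast
  | x :: c :: l, _, a, ha, hpa, hlast => by
    rw [getLast_cons (cons_ne_nil c l)] at hlast
    have descend : ∀ {a'}, a' ∈ c :: l → p a' →
        ∃ e ∈ (x :: c :: l).zip (c :: l), p e.1 ∧ ¬ p e.2 := fun ha' hpa' =>
        let ⟨e, he, hpe⟩ := exists_mem_zip_tail_of_mem_of_not_getLast _ ha' hpa' hlast
        ⟨e, mem_cons_of_mem _ he, hpe⟩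
    by_cases hpc : p c
    · exact descend mem_cons_self hpc
    rcases mem_cons.mp ha with rfl | ha
    · exact ⟨(a, c), mem_cons_self, hpa, hpc⟩
    · exact descend ha hpa

end List

theorem DiPath.exists_mem_edgeSet_cross {V : Type*} {Adj : V → V → Prop} (P : DiPath Adj)
    {D : Set V} {v : V} (hv : v ∈ P.verts) (hvD : v ∈ D) (hlast : P.last ∉ D) :
    ∃ e ∈ P.edgeSet, e ∈ Cross Adj D :=
  let ⟨e, he, h1, h2⟩ := List.exists_mem_zip_tail_of_mem_of_not_getLast P.ne hv hvD hlast
  ⟨e, he, P.chain.rel_of_mem_zip_tail he, h1, h2⟩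

theorem Set.PairwiseDisjoint.ncard_le_of_inter_nonempty {ι α : Type*} {E : ι → Set α}
    {T : Set ι} {C : Set α} (hdisj : T.PairwiseDisjoint E) (hC : C.Finite)
    (hmeet : ∀ t ∈ T, (E t ∩ C).Nonempty) : T.ncard ≤ C.ncard := by
  rcases T.eq_empty_or_nonempty with rfl | ⟨t₀, ht₀⟩
  · simp
  have : Nonempty α := ⟨(hmeet t₀ ht₀).some⟩
  choose! f hf using hmeet
  refine Set.ncard_le_ncard_of_injOn f (fun t ht => (hf t ht).2) ?_ hC
  intro t ht u hu hfe
  by_contra hne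
  exact Set.disjoint_left.mp (hdisj ht hu hne) (hf t ht).1 (hfe ▸ (hf u hu).1)

theorem stmt5_general {V : Type*} (Adj : V → V → Prop) (b : V) (I : Set V)
    (D D' : Set V) (hsub : D' ⊆ D) (hD' : Exact Adj b I D')
    (L : ↥(I ∩ D) → DiPath Adj)
    (hfirst : ∀ s, (L s).first = (s : V)) (hlast : ∀ s, (L s).last = b)
    (hdisj : ∀ s t, s ≠ t → Disjoint (L s).edgeSet (L t).edgeSet)
    (s : ↥(I ∩ D)) (hs : (s : V) ∉ D') :
    ∀ v ∈ (L s).verts, v ∉ D' := by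
  intro v hv hvD'
  obtain ⟨hbD', hCross, hD'I, hcard⟩ := hD'
  set A : Set ↥(I ∩ D) := Subtype.val ⁻¹' (D' ∩ I)
  have hA_range : D' ∩ I ⊆ Set.range (Subtype.val : ↥(I ∩ D) → V) :=
    fun x hx => ⟨⟨x, hx.2, hsub hx.1⟩, rfl⟩
  have hA_fin : A.Finite := hD'I.preimage Subtype.val_injective.injOn
  have hA_card : A.ncard = (D' ∩ I).ncard :=
    Set.ncard_preimage_of_injective_subset_range Subtype.val_injective hA_range
  have hcrossing : ∀ t ∈ insert s A, ((L t).edgeSet ∩ Cross Adj D').Nonempty := by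
    intro t ht
    obtain ⟨w, hw, hwD'⟩ : ∃ w ∈ (L t).verts, w ∈ D' := by
      rcases ht with rfl | htA
      · exact ⟨v, hv, hvD'⟩
      · exact ⟨(L t).first, List.head_mem _, hfirst t ▸ htA.1⟩
    exact (L t).exists_mem_edgeSet_cross hw hwD' (hlast t ▸ hbD')
  have hle := Set.PairwiseDisjoint.ncard_le_of_inter_nonempty
    (fun t _ u _ htu => hdisj t u htu) hCross hcrossing
  rw [Set.ncard_insert_of_notMem (fun hsA => hs hsA.1) hA_fin, hA_card, hcard] at hle
  omega

theorem stmt5 {V : Type*} (Adj : V → V → Prop) (b : V) (I : Set V) (hb : b ∉ I)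
    (hlink : ∀ S : Finset V, ↑S ⊆ I → FinLinked Adj b S)
    (D D' : Set V) (hsub : D' ⊆ D) (hD' : Exact Adj b I D')
    (L : ↥(I ∩ D) → DiPath Adj)
    (hfirst : ∀ s, (L s).first = (s : V)) (hlast : ∀ s, (L s).last = b)
    (hdisj : ∀ s t, s ≠ t → Disjoint (L s).edgeSet (L t).edgeSet)
    (s : ↥(I ∩ D)) (hs : (s : V) ∉ D') :
    ∀ v ∈ (L s).verts, v ∉ D' :=
  stmt5_general Adj b I D D' hsub hD' L hfirst hlast hdisj s hs
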